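/- Let 𝒜 = {A_m} be a strictly convergent (A,I)-pre-Weierstrass system. If f ∈ A_m satisfies f̃ = 0 (i.e. every coefficient of f lies in I), then f lies in the ideal I·A_m of A_m generated by the elements of I. -/

import Mathlib

noncomputable section
open scoped Classical
open MvPowerSeries

namespace SCW

variable {A : Type*} [CommRing A]

/-- `f` involves only the variables `ξ_1, …, ξ_m`, i.e. those with index `< m`. -/
def VarsBelow (m : ℕ) (f : MvPowerSeries ℕ A) : Prop :=
  ∀ d : ℕ →₀ ℕ, (∃ i ∈ d.support, m ≤ i) → MvPowerSeries.coeff d f = 0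

/-- The coefficient series `f̄_μ` of `(ξ'')^μ` when `f` is written as a series in the
variables of index `≥ m` with coefficients that are series in the variables of index `< m`. -/
def sliceA (m : ℕ) (μ : ℕ →₀ ℕ) (f : MvPowerSeries ℕ A) : MvPowerSeries ℕ A :=
  fun d => if (∀ i ∈ d.support, i < m) then MvPowerSeries.coeff (d + μ) f else 0

/-- The action of a permutation of the variables on a power series. -/
def permuteA (e : Equiv.Perm ℕ) (f : MvPowerSeries ℕ A) : MvPowerSeries ℕ A :=
  fun d => MvPowerSeries.coeff (Finsupp.equivMapDomain e d) f

/-- Coefficientwise reduction modulo the ideal `I`. -/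
def red (I : Ideal A) : MvPowerSeries ℕ A → MvPowerSeries ℕ (A ⧸ I) :=
  MvPowerSeries.map (σ := ℕ) (Ideal.Quotient.mk I)

/-- `f` is (equal to) a polynomial in the variables of index `< m`. -/
def IsPolyBelow {R : Type*} [CommRing R] (m : ℕ) (f : MvPowerSeries ℕ R) : Prop :=
  ∃ p : MvPolynomial ℕ R, (∀ i ∈ p.vars, i < m) ∧ f = ↑p

/-- A family `{A_m}` of subalgebras `A[ξ_1,…,ξ_m] ⊆ A_m ⊆ A_{m'} ⊆ A[[ξ_1,…,ξ_{m'}]]`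
(`m ≤ m'`), closed under permutations of the variables, satisfying condition (*)
(coefficients of `f ∈ A_{m'}` as a series in `ξ_{m+1},…,ξ_{m'}` lie in `A_m`) and condition (**)
(the image of `A_m` under reduction mod `I` is the polynomial ring `(A/I)[ξ_1,…,ξ_m]`). -/
structure SCFamily (A : Type u) [CommRing A] (I : Ideal A) : Type u where
  Am : ℕ → Subalgebra A (MvPowerSeries ℕ A)
  mono : ∀ {m m' : ℕ}, m ≤ m' → Am m ≤ Am m'
  varsBelow : ∀ m, ∀ f ∈ Am m, VarsBelow m f
  poly_mem : ∀ m (p : MvPolynomial ℕ A), (∀ i ∈ p.vars, i < m) →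
    (↑p : MvPowerSeries ℕ A) ∈ Am m
  perm_closed : ∀ m (e : Equiv.Perm ℕ), (∀ i, m ≤ i → e i = i) →
    ∀ f ∈ Am m, permuteA e f ∈ Am m
  slice_mem : ∀ {m m' : ℕ}, m ≤ m' → ∀ μ : ℕ →₀ ℕ, (∀ i ∈ μ.support, m ≤ i) →
    ∀ f ∈ Am m', sliceA m μ f ∈ Am m
  red_poly : ∀ m, ∀ f ∈ Am m, IsPolyBelow m (red I f)
  poly_lift : ∀ m (q : MvPolynomial ℕ (A ⧸ I)), (∀ i ∈ q.vars, i < m) →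
    ∃ f ∈ Am m, red I f = ↑q

/-- `f ∈ A[[ξ_1,…,ξ_m]]` is regular in `ξ_m` of degree `d`: its reduction `f̃` mod `I` is a
monic polynomial in `ξ_m` of degree `d` with coefficients in `(A/I)[ξ_1,…,ξ_{m-1}]`. -/
def SCRegular (I : Ideal A) (m d : ℕ) (f : MvPowerSeries ℕ A) : Prop :=
  ∃ c : Fin d → MvPolynomial ℕ (A ⧸ I), (∀ i, ∀ j ∈ (c i).vars, j < m - 1) ∧
    red I f = ↑((MvPolynomial.X (m - 1) : MvPolynomial ℕ (A ⧸ I)) ^ d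
      + ∑ i : Fin d, c i * (MvPolynomial.X (m - 1)) ^ (i : ℕ))

/-- Weierstrass preparation for the family `{A_m}`: every `f ∈ A_m` regular in `ξ_m` of
degree `d` factors uniquely as a unit of `A_m` times a monic (Weierstrass) polynomial of degree
`d` in `ξ_m` with lower coefficients in `A_{m-1}`. -/
def HasWP {A : Type u} [CommRing A] {I : Ideal A} (𝒜 : SCFamily A I) : Prop :=
  ∀ d m : ℕ, 1 ≤ m → ∀ f ∈ 𝒜.Am m, SCRegular I m d f →
    ∃! ur : MvPowerSeries ℕ A × (Fin d → MvPowerSeries ℕ A),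
      ur.1 ∈ 𝒜.Am m ∧ (∃ v ∈ 𝒜.Am m, ur.1 * v = 1) ∧ (∀ i, ur.2 i ∈ 𝒜.Am (m - 1)) ∧
      f = ur.1 * ((MvPowerSeries.X (m - 1)) ^ d
        + ∑ i : Fin d, ur.2 i * (MvPowerSeries.X (m - 1)) ^ (i : ℕ))


/-- An analytic `𝒜`-structure on a valued field `L` with valuation ring `O`: a system of ring
homomorphisms `σ_m : A_m → Fun((O)^m, O)` with `I ⊆ σ_0⁻¹(L°°)`, sending `ξ_i` to the `i`-th
coordinate function, with `σ_{m+1}` extending `σ_m`. -/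
structure AnalyticStructure {A : Type u} [CommRing A] (I : Ideal A)
    (Am : ℕ → Subalgebra A (MvPowerSeries ℕ A))
    (L : Type v) [Field L] (O : ValuationSubring L) : Type (max u v) where
  σ : (m : ℕ) → ↥(Am m) →+* ((Fin m → ↥O) → ↥O)
  cond1 : ∀ a ∈ I, ∀ (h : (MvPowerSeries.C (σ := ℕ) (R := A) a) ∈ Am 0) (x : Fin 0 → ↥O),
    σ 0 ⟨MvPowerSeries.C (σ := ℕ) (R := A) a, h⟩ x ∈ IsLocalRing.maximalIdeal ↥O
  cond2 : ∀ (m i : ℕ) (hi : i < m) (h : (MvPowerSeries.X i : MvPowerSeries ℕ A) ∈ Am m)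
      (x : Fin m → ↥O), σ m ⟨MvPowerSeries.X i, h⟩ x = x ⟨i, hi⟩
  cond3 : ∀ (m : ℕ) (f : MvPowerSeries ℕ A) (hf : f ∈ Am m) (hf' : f ∈ Am (m + 1))
      (x : Fin (m + 1) → ↥O), σ (m + 1) ⟨f, hf'⟩ x = σ m ⟨f, hf⟩ (x ∘ Fin.castSucc)

/-- A strictly convergent `(A,I)`-pre-Weierstrass system: a system `{A_m}` (conditions
(i)–(v)), together with Weierstrass preparation (vi), the weak Noetherian property (vii),
and the faithfulness condition (viii). -/
structure SCPreWS (A : Type u) [CommRing A] (I : Ideal A) extends SCFamily A I where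
  wprep : HasWP toSCFamily
  wnp : ∀ m, ∀ f ∈ Am m, ∃ J : Finset (ℕ →₀ ℕ), ∃ g : (ℕ →₀ ℕ) → MvPowerSeries ℕ A,
    (∀ μ ∈ J, g μ ∈ Am m ∧ red I (g μ) = 0) ∧
    f = ∑ μ ∈ J, (MvPowerSeries.monomial μ (MvPowerSeries.coeff μ f)) * (1 + g μ)
  faithful : ∀ a : A,
    (∀ (L : Type u) [Field L] (O : ValuationSubring L)
      (τ : AnalyticStructure I Am L O) (h : MvPowerSeries.C (σ := ℕ) (R := A) a ∈ Am 0),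
      τ.σ 0 ⟨MvPowerSeries.C (σ := ℕ) (R := A) a, h⟩ = 0) → a = 0

/-- `f` lies in the ideal of the subring (with underlying set `T`) generated by the set `S`:
it is a finite combination `Σ cᵢ·gᵢ` with `cᵢ ∈ T` and `gᵢ ∈ S`. -/
def memSpan {R : Type*} [CommRing R] (T S : Set R) (f : R) : Prop :=
  ∃ (k : ℕ) (c g : Fin k → R), (∀ i, c i ∈ T) ∧ (∀ i, g i ∈ S) ∧ f = ∑ i, c i * g i

/-- The set of constant power series with constant in `I`. -/
def constsOf {A : Type*} [CommRing A] (I : Ideal A) : Set (MvPowerSeries ℕ A) :=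
  {f | ∃ a ∈ I, f = MvPowerSeries.C (σ := ℕ) (R := A) a}

/-- The set of variables with index in `[lo, hi)`. -/
def varsIn (A : Type*) [CommRing A] (lo hi : ℕ) : Set (MvPowerSeries ℕ A) :=
  {f | ∃ j : ℕ, lo ≤ j ∧ j < hi ∧ f = MvPowerSeries.X j}

/-- The set of products of two variables with indices in `[lo, hi)`. -/
def varsPairsIn (A : Type*) [CommRing A] (lo hi : ℕ) : Set (MvPowerSeries ℕ A) :=
  {f | ∃ j k : ℕ, lo ≤ j ∧ j < hi ∧ lo ≤ k ∧ k < hi ∧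
    f = MvPowerSeries.X j * MvPowerSeries.X k}

/- Convention for a henselian system over `(ξ,ρ)` with unknowns `(η,λ)`:
within `A_{m+M,n+N} = A_{m+M+n+N}`, the variable `ξ_{i+1}` has index `i` (`i < m`),
`η_{i+1}` has index `m+i` (`i < M`), `ρ_{j+1}` has index `m+M+j` (`j < n`), and
`λ_{j+1}` has index `m+M+n+j` (`j < N`). -/

/-- A henselian system `Σ` for the unknowns `(η,λ)` over `(ξ,ρ)`:
`η_i = b_{0,i}(ξ,ρ) + b_{1,i}(ξ,ρ,η,λ)` and `λ_j = c_{0,j}(ξ,ρ) + c_{1,j}(ξ,ρ,η,λ)` where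
`b_{0,i} ∈ A[ξ,ρ]`, `b_{1,i} ∈ (I,ρ,λ)A_{m+M,n+N}`, `c_{0,j} ∈ (ρ)A[ξ,ρ]` and
`c_{1,j} ∈ (I,ρ,λ²)A_{m+M,n+N}`. -/
structure HenselSys {A : Type u} [CommRing A] {I : Ideal A} (𝒜 : SCFamily A I)
    (m n M N : ℕ) where
  b0 : Fin M → MvPolynomial ℕ A
  b1 : Fin M → MvPowerSeries ℕ A
  c0 : Fin N → MvPolynomial ℕ A
  c1 : Fin N → MvPowerSeries ℕ A
  b0_vars : ∀ i, ∀ v ∈ (b0 i).vars, v < m ∨ (m + M ≤ v ∧ v < m + M + n)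
  c0_div : ∀ j, ∃ q : Fin n → MvPolynomial ℕ A,
    (∀ k, ∀ v ∈ (q k).vars, v < m ∨ (m + M ≤ v ∧ v < m + M + n)) ∧
    c0 j = ∑ k : Fin n, MvPolynomial.X (m + M + (k : ℕ)) * q k
  b1_mem : ∀ i, memSpan (𝒜.Am (m + M + n + N) : Set (MvPowerSeries ℕ A))
    (constsOf I ∪ varsIn A (m + M) (m + M + n + N)) (b1 i)
  c1_mem : ∀ j, memSpan (𝒜.Am (m + M + n + N) : Set (MvPowerSeries ℕ A))
    (constsOf I ∪ varsIn A (m + M) (m + M + n) ∪ varsPairsIn A (m + M + n) (m + M + n + N))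
    (c1 j)

/-- The `M + N` generators of the ideal `I_Σ` of a henselian system. -/
def HenselSys.gens {A : Type u} [CommRing A] {I : Ideal A} {𝒜 : SCFamily A I}
    {m n M N : ℕ} (S : HenselSys 𝒜 m n M N) : Fin M ⊕ Fin N → MvPowerSeries ℕ A :=
  Sum.elim
    (fun i => MvPowerSeries.X (m + (i : ℕ)) - (↑(S.b0 i) : MvPowerSeries ℕ A) - S.b1 i)
    (fun j => MvPowerSeries.X (m + M + n + (j : ℕ)) - (↑(S.c0 j) : MvPowerSeries ℕ A) - S.c1 j)

/-- `Σ` is a polynomial henselian system: all generators of `I_Σ` are polynomials. -/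
def HenselSys.IsPolynomial {A : Type u} [CommRing A] {I : Ideal A} {𝒜 : SCFamily A I}
    {m n M N : ℕ} (S : HenselSys 𝒜 m n M N) : Prop :=
  (∀ i, ∃ p : MvPolynomial ℕ A, S.b1 i = ↑p) ∧ (∀ j, ∃ p : MvPolynomial ℕ A, S.c1 j = ↑p)

/-- The total degree of the exponent `d` in the variables of index `≥ t`. -/
def rhoDeg (t : ℕ) (d : ℕ →₀ ℕ) : ℕ := ∑ i ∈ d.support, if t ≤ i then d i else 0

/-- Truncation of `f` keeping the monomials of degree `< k` in the variables of index `≥ t`. -/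
def rhoTrunc (t k : ℕ) (f : MvPowerSeries ℕ A) : MvPowerSeries ℕ A :=
  fun d => if rhoDeg t d < k then MvPowerSeries.coeff d f else 0

/-- `h ∈ A_m[[ρ]]`: `h` only involves the variables `ξ` (indices `< m`) and `ρ`
(indices in `[m+M, m+M+n)`), and all its coefficients, as a series in `ρ` (and the remaining
variables), lie in `A_m`. -/
def MemAmRho {A : Type u} [CommRing A] {I : Ideal A} (𝒜 : SCFamily A I)
    (m M n : ℕ) (h : MvPowerSeries ℕ A) : Prop :=
  (∀ d : ℕ →₀ ℕ, (∃ i ∈ d.support, ¬ (i < m ∨ (m + M ≤ i ∧ i < m + M + n))) →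
    MvPowerSeries.coeff d h = 0) ∧
  ∀ μ : ℕ →₀ ℕ, sliceA m μ h ∈ 𝒜.Am m

/-- The index (in `A_{m+M+n+N}`) of the unknown `η_i` resp. `λ_j`. -/
def etaLamIdx (m n M N : ℕ) : Fin M ⊕ Fin N → ℕ :=
  Sum.elim (fun i => m + (i : ℕ)) (fun j => m + M + n + (j : ℕ))

/-- The generating set used at step `k`: the series `η_s − p_{k,s}` (where `p_k` is the tuple
of `ρ`-degree `< k` truncations of `h`) together with the monomials of degree `k` in `ρ`
(generating the `k`-th power of the ideal `(ρ_1,…,ρ_n)`). -/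
def stepGens {A : Type u} [CommRing A] (m n M N : ℕ)
    (h : Fin M ⊕ Fin N → MvPowerSeries ℕ A) (k : ℕ) : Set (MvPowerSeries ℕ A) :=
  (Set.range fun s : Fin M ⊕ Fin N =>
    MvPowerSeries.X (etaLamIdx m n M N s) - rhoTrunc m k (h s)) ∪
  {f | ∃ μ : ℕ →₀ ℕ, (∀ i ∈ μ.support, m + M ≤ i ∧ i < m + M + n) ∧
    (∑ i ∈ μ.support, μ i) = k ∧ f = MvPowerSeries.monomial μ 1}

/-- `h` is a power series solution of the henselian system `S`. -/
def IsSolution {A : Type u} [CommRing A] {I : Ideal A} {𝒜 : SCFamily A I}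
    {m n M N : ℕ} (S : HenselSys 𝒜 m n M N)
    (h : Fin M ⊕ Fin N → MvPowerSeries ℕ A) : Prop :=
  (∀ s, MemAmRho 𝒜 m M n (h s)) ∧
  ∀ k : ℕ, 1 ≤ k → ∀ s, memSpan (𝒜.Am (m + M + n + N) : Set (MvPowerSeries ℕ A))
    (stepGens m n M N h k) (S.gens s)

/-- `r` is the composition `g(ξ,ρ,h(ξ,ρ))` of `g` with the solution `h` of the system `S`. -/
def IsComp {A : Type u} [CommRing A] {I : Ideal A} {𝒜 : SCFamily A I}
    {m n M N : ℕ} (S : HenselSys 𝒜 m n M N)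
    (h : Fin M ⊕ Fin N → MvPowerSeries ℕ A) (g r : MvPowerSeries ℕ A) : Prop :=
  MemAmRho 𝒜 m M n r ∧
  ∀ k : ℕ, 1 ≤ k → memSpan (𝒜.Am (m + M + n + N) : Set (MvPowerSeries ℕ A))
    (stepGens m n M N h k) (g - rhoTrunc m k r)

/-- Reindexing a one-kind power series in the variables `ξ` (indices `< m`) and `ρ`
(indices in `[m+gap, ∞)`) as a two-kinds power series, `ξ_i ↦ inl i`, `ρ_j ↦ inr j`. -/
def toSep {A : Type*} [CommRing A] (m gap : ℕ) (f : MvPowerSeries ℕ A) :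
    MvPowerSeries (ℕ ⊕ ℕ) A :=
  fun e => if (∀ i : ℕ, m ≤ i → e (Sum.inl i) = 0)
    then MvPowerSeries.coeff
      (Finsupp.mapDomain (Sum.elim id (fun j => m + gap + j)) e) f
    else 0

/-- The ring `A^H_{m,n} ⊆ A[[ξ,ρ]]` of all compositions `g(ξ,ρ,h_Σ(ξ,ρ))` where `Σ` is a
henselian system for `(η,λ)` over `(ξ,ρ)`, `h_Σ` its power series solution, and
`g ∈ A_{m+M,n+N}`. -/
def AH {A : Type u} [CommRing A] {I : Ideal A} (𝒜 : SCFamily A I) (m n : ℕ) :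
    Set (MvPowerSeries (ℕ ⊕ ℕ) A) :=
  {F | ∃ (M N : ℕ) (S : HenselSys 𝒜 m n M N) (h : Fin M ⊕ Fin N → MvPowerSeries ℕ A)
    (g r : MvPowerSeries ℕ A), IsSolution S h ∧ g ∈ 𝒜.Am (m + M + n + N) ∧
    IsComp S h g r ∧ F = toSep m M r}

/-- As `AH`, but using only polynomial henselian systems. -/
def AHpoly {A : Type u} [CommRing A] {I : Ideal A} (𝒜 : SCFamily A I) (m n : ℕ) :
    Set (MvPowerSeries (ℕ ⊕ ℕ) A) :=
  {F | ∃ (M N : ℕ) (S : HenselSys 𝒜 m n M N) (h : Fin M ⊕ Fin N → MvPowerSeries ℕ A)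
    (g r : MvPowerSeries ℕ A), S.IsPolynomial ∧ IsSolution S h ∧ g ∈ 𝒜.Am (m + M + n + N) ∧
    IsComp S h g r ∧ F = toSep m M r}

/-- `f` involves only the `ξ`-variables of index `< k`. -/
def OnlyXiBelow {A : Type*} [CommRing A] (k : ℕ) (f : MvPowerSeries (ℕ ⊕ ℕ) A) : Prop :=
  ∀ d : (ℕ ⊕ ℕ) →₀ ℕ, (∃ v ∈ d.support, ¬ ∃ i : ℕ, i < k ∧ v = Sum.inl i) →
    MvPowerSeries.coeff d f = 0

/-- Separated regularity in `ξ_m` of degree `d` for `f ∈ A[[ξ,ρ]]` : `f` is congruent to a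
monic polynomial in `ξ_m` of degree `d`, modulo the ideal `J + (ρ)A[[ξ,ρ]]` where `J` is the
ideal of series all of whose coefficients lie in `I`. -/
def RegXiH {A : Type*} [CommRing A] (I : Ideal A) (m d : ℕ)
    (f : MvPowerSeries (ℕ ⊕ ℕ) A) : Prop :=
  ∃ c : Fin d → MvPowerSeries (ℕ ⊕ ℕ) A, (∀ i, OnlyXiBelow (m - 1) (c i)) ∧
    ∀ e : (ℕ ⊕ ℕ) →₀ ℕ, (∀ j : ℕ, e (Sum.inr j) = 0) →
      MvPowerSeries.coeff e
        (f - ((MvPowerSeries.X (Sum.inl (m - 1))) ^ d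
          + ∑ i : Fin d, c i * (MvPowerSeries.X (Sum.inl (m - 1))) ^ (i : ℕ))) ∈ I

/-- Separated regularity in `ρ_n` of degree `d` for `f ∈ A[[ξ,ρ]]` : `f ≡ ρ_n^d` modulo the
ideal `J + (ρ_1,…,ρ_{n-1},ρ_n^{d+1})A[[ξ,ρ]]`. -/
def RegRhoH {A : Type*} [CommRing A] (I : Ideal A) (n d : ℕ)
    (f : MvPowerSeries (ℕ ⊕ ℕ) A) : Prop :=
  ∀ e : (ℕ ⊕ ℕ) →₀ ℕ, (∀ j : ℕ, j ≠ n - 1 → e (Sum.inr j) = 0) →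
    e (Sum.inr (n - 1)) ≤ d →
    MvPowerSeries.coeff e (f - (MvPowerSeries.X (Sum.inr (n - 1))) ^ d) ∈ I


/-- `varOK m n v` says that the two-kinds variable `v` is one of `ξ_1,…,ξ_m,ρ_1,…,ρ_n`. -/
def varOK (m n : ℕ) : ℕ ⊕ ℕ → Prop := Sum.elim (· < m) (· < n)

/-- The action of a permutation of the variables on a separated power series. -/
def permute2 {A : Type*} [CommRing A] (e : Equiv.Perm (ℕ ⊕ ℕ))
    (f : MvPowerSeries (ℕ ⊕ ℕ) A) : MvPowerSeries (ℕ ⊕ ℕ) A :=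
  fun d => MvPowerSeries.coeff (Finsupp.equivMapDomain e d) f

/-- Coefficientwise reduction modulo the ideal `I`, two-kinds version. -/
def red2 {A : Type*} [CommRing A] (I : Ideal A) :
    MvPowerSeries (ℕ ⊕ ℕ) A → MvPowerSeries (ℕ ⊕ ℕ) (A ⧸ I) :=
  MvPowerSeries.map (σ := (ℕ ⊕ ℕ)) (Ideal.Quotient.mk I)

/-- The coefficient series `f̄_{μν}` of `(ξ'')^μ(ρ'')^ν` when `f` is written as a series in the
variables `ξ_i (i > m), ρ_j (j > n)` with coefficients series in `ξ_1,…,ξ_m,ρ_1,…,ρ_n`. -/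
def slice2 {A : Type*} [CommRing A] (m n : ℕ) (μ : (ℕ ⊕ ℕ) →₀ ℕ)
    (f : MvPowerSeries (ℕ ⊕ ℕ) A) : MvPowerSeries (ℕ ⊕ ℕ) A :=
  fun d => if (∀ v ∈ d.support, varOK m n v) then MvPowerSeries.coeff (d + μ) f else 0

/-- The coefficient (a series in `ξ` only) of `ρ^μ` in `f`, viewing `f ∈ R[[ξ]][[ρ]]`. -/
def sliceRho {R : Type*} [CommRing R] (μ : ℕ →₀ ℕ) (f : MvPowerSeries (ℕ ⊕ ℕ) R) :
    MvPowerSeries (ℕ ⊕ ℕ) R :=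
  fun d => if (∀ j : ℕ, d (Sum.inr j) = 0)
    then MvPowerSeries.coeff (d + μ.mapDomain Sum.inr) f else 0

/-- `f` is (equal to) a polynomial in the `ξ`-variables only. -/
def IsPolyXi {R : Type*} [CommRing R] (f : MvPowerSeries (ℕ ⊕ ℕ) R) : Prop :=
  ∃ p : MvPolynomial (ℕ ⊕ ℕ) R, (∀ v ∈ p.vars, ∃ i : ℕ, v = Sum.inl i) ∧ f = ↑p

/-- The set of constant two-kinds power series with constant in `I`. -/
def constsOf2 {A : Type*} [CommRing A] (I : Ideal A) : Set (MvPowerSeries (ℕ ⊕ ℕ) A) :=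
  {f | ∃ a ∈ I, f = MvPowerSeries.C (σ := (ℕ ⊕ ℕ)) (R := A) a}

/-- The set of `ξ`-variables `ξ_1,…,ξ_m`. -/
def xiVarsBelow (A : Type*) [CommRing A] (m : ℕ) : Set (MvPowerSeries (ℕ ⊕ ℕ) A) :=
  {f | ∃ i : ℕ, i < m ∧ f = MvPowerSeries.X (Sum.inl i)}

/-- The set of `ρ`-variables `ρ_1,…,ρ_n`. -/
def rhoVarsBelow (A : Type*) [CommRing A] (n : ℕ) : Set (MvPowerSeries (ℕ ⊕ ℕ) A) :=
  {f | ∃ j : ℕ, j < n ∧ f = MvPowerSeries.X (Sum.inr j)}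

/-- The formal partial derivative `∂f/∂ξ_{i+1}` of a power series. -/
def pder {A : Type*} [CommRing A] (i : ℕ) (f : MvPowerSeries ℕ A) : MvPowerSeries ℕ A :=
  fun d => ((d i + 1 : ℕ) : A) * MvPowerSeries.coeff (d + Finsupp.single i 1) f

/-- Assembling a point of `(K°)^m × (K°)^M × (K°)^n × (K°)^N` into a point of
`(K°)^{m+M+n+N}`, following the index conventions of a henselian system. -/
def assemble {α : Type*} (m M n N : ℕ) (x : Fin m → α) (y : Fin M → α)
    (r : Fin n → α) (z : Fin N → α) : Fin (m + M + n + N) → α :=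
  fun i => if h1 : (i : ℕ) < m then x ⟨i, h1⟩
    else if h2 : (i : ℕ) < m + M then y ⟨(i : ℕ) - m, by omega⟩
    else if h3 : (i : ℕ) < m + M + n then r ⟨(i : ℕ) - (m + M), by omega⟩
    else z ⟨(i : ℕ) - (m + M + n), by have := i.isLt; omega⟩

/-- Goodness of a strictly convergent pre-Weierstrass system: whenever a composition
`F(ξ,ρ,h_Σ(ξ,ρ))` vanishes, `F` lies in `I_Σ · (A_{m+M,n+N})_{1+(I,ρ,λ)}`, i.e. `(1+w)·F ∈ I_Σ`
for some `w ∈ (I,ρ,λ)A_{m+M,n+N}`. -/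
def IsGood {A : Type u} [CommRing A] {I : Ideal A} (𝒜 : SCFamily A I) : Prop :=
  ∀ (m n M N : ℕ) (S : HenselSys 𝒜 m n M N) (h : Fin M ⊕ Fin N → MvPowerSeries ℕ A)
    (F : MvPowerSeries ℕ A), IsSolution S h → F ∈ 𝒜.Am (m + M + n + N) →
    IsComp S h F 0 →
    ∃ w : MvPowerSeries ℕ A,
      memSpan (𝒜.Am (m + M + n + N) : Set (MvPowerSeries ℕ A))
        (constsOf I ∪ varsIn A (m + M) (m + M + n + N)) w ∧
      memSpan (𝒜.Am (m + M + n + N) : Set (MvPowerSeries ℕ A))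
        (Set.range S.gens) ((1 + w) * F)

/-- The `I`-adic completion of `A[ξ_1,…,ξ_m]` inside `A[[ξ_1,…,ξ_m]]`: the series such that,
for every `k`, all but finitely many coefficients lie in `I^k`. -/
def AdicAm (A : Type u) [CommRing A] (I : Ideal A) (m : ℕ) : Set (MvPowerSeries ℕ A) :=
  {f | VarsBelow m f ∧ ∀ k : ℕ, 1 ≤ k →
    {d : ℕ →₀ ℕ | MvPowerSeries.coeff d f ∉ I ^ k}.Finite}

/-- The ring `T_m(K)° = K°⟨ξ_1,…,ξ_m⟩` of strictly convergent power series over the valuation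
ring `O = K°` of `K`: power series with coefficients in `K°` tending to `0`. -/
def TateAm {K : Type u} [Field K] (v : AbsoluteValue K ℝ) (O : Subring K) (m : ℕ) :
    Set (MvPowerSeries ℕ ↥O) :=
  {f | VarsBelow m f ∧ ∀ ε : ℝ, 0 < ε →
    {d : ℕ →₀ ℕ | ε ≤ v ((MvPowerSeries.coeff d f : ↥O) : K)}.Finite}

end SCW


/-! By the weak Noetherian property, `f = Σ_{μ ∈ J} a_μ ξ^μ (1 + g_μ)` with `g_μ ∈ A_m`, and each
`a_μ` is a coefficient of `f`, hence lies in `I`. So `f = Σ (ξ^μ (1 + g_μ)) · a_μ` exhibits `f` in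
`I·A_m`, once the terms with `a_μ = 0` are dropped: only for the remaining ones is `ξ^μ` known to
involve just `ξ_1,…,ξ_m`, i.e. to lie in `A_m`. -/

theorem MvPolynomial.vars_monomial_subset {σ R : Type*} [CommRing R] (μ : σ →₀ ℕ) (r : R) :
    (MvPolynomial.monomial μ r).vars ⊆ μ.support := by
  intro i hi
  obtain ⟨d, hd, hi⟩ := (MvPolynomial.mem_vars_iff_mem_support i).mp hi
  rw [MvPolynomial.support_monomial] at hd
  split_ifs at hd <;> simp_all

theorem MvPowerSeries.monomial_eq_monomial_one_mul_C {σ R : Type*} [CommRing R]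
    (μ : σ →₀ ℕ) (a : R) : monomial μ a = monomial μ 1 * C a := by
  rw [← monomial_zero_eq_C_apply, monomial_mul_monomial, add_zero, one_mul]

namespace SCW

theorem memSpan_finset_sum {R ι : Type*} [CommRing R] {T S : Set R} (s : Finset ι)
    (c g : ι → R) (hc : ∀ i ∈ s, c i ∈ T) (hg : ∀ i ∈ s, g i ∈ S) :
    memSpan T S (∑ i ∈ s, c i * g i) := by
  let e := s.equivFin.symm
  refine ⟨s.card, fun k => c (e k), fun k => g (e k), fun k => hc _ (e k).2,
    fun k => hg _ (e k).2, ?_⟩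
  rw [← Finset.sum_coe_sort s, ← Equiv.sum_comp e]

variable {A : Type u} [CommRing A] {I : Ideal A}

theorem coeff_mem_of_red_eq_zero {f : MvPowerSeries ℕ A} (hf : red I f = 0)
    (d : ℕ →₀ ℕ) : coeff d f ∈ I := by
  rw [← Ideal.Quotient.eq_zero_iff_mem, ← coeff_map, ← red, hf, map_zero]

theorem VarsBelow.lt_of_coeff_ne_zero {m : ℕ} {f : MvPowerSeries ℕ A} (hf : VarsBelow m f)
    {μ : ℕ →₀ ℕ} (hμ : coeff μ f ≠ 0) : ∀ i ∈ μ.support, i < m := by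
  by_contra! h
  exact hμ (hf μ h)

theorem SCFamily.monomial_one_mem (𝒜 : SCFamily A I) {m : ℕ} {μ : ℕ →₀ ℕ}
    (hμ : ∀ i ∈ μ.support, i < m) : monomial μ (1 : A) ∈ 𝒜.Am m := by
  rw [← MvPolynomial.coe_monomial]
  exact 𝒜.poly_mem m _ fun i hi => hμ i (MvPolynomial.vars_monomial_subset μ 1 hi)

end SCW

open SCW in
theorem stmt11_general {A : Type u} [CommRing A] (I : Ideal A) (𝒜 : SCPreWS A I)
    (m : ℕ) (f : MvPowerSeries ℕ A) (hf : f ∈ 𝒜.Am m) (h0 : red I f = 0) :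
    memSpan (𝒜.Am m : Set (MvPowerSeries ℕ A)) (constsOf I) f := by
  obtain ⟨J, g, hg, hsum⟩ := 𝒜.wnp m f hf
  have hdrop : ∑ μ ∈ J with (∀ i ∈ μ.support, i < m), monomial μ (coeff μ f) * (1 + g μ) = f := by
    refine (Finset.sum_filter_of_ne fun μ _ hterm => ?_).trans hsum.symm
    exact (𝒜.varsBelow m f hf).lt_of_coeff_ne_zero fun h => hterm (by rw [h, map_zero, zero_mul])
  have hterm (μ : ℕ →₀ ℕ) : monomial μ (coeff μ f) * (1 + g μ) =
      (monomial μ 1 * (1 + g μ)) * C (coeff μ f) := by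
    rw [monomial_eq_monomial_one_mul_C, mul_right_comm]
  rw [← hdrop, Finset.sum_congr rfl fun μ _ => hterm μ]
  refine memSpan_finset_sum _ _ _ (fun μ hμ => ?_)
    fun μ _ => ⟨_, coeff_mem_of_red_eq_zero h0 μ, rfl⟩
  rw [Finset.mem_filter] at hμ
  exact mul_mem (𝒜.monomial_one_mem hμ.2) (add_mem (one_mem _) (hg μ hμ.1).1)

open SCW in
/-- if every coefficient of `f ∈ A_m` lies in `I`, then `f ∈ I·A_m`
(Remark 3.6 c)). -/
theorem stmt11 {A : Type u} [CommRing A] (I : Ideal A) (hI : I ≠ ⊤) (𝒜 : SCPreWS A I)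
    (m : ℕ) (f : MvPowerSeries ℕ A) (hf : f ∈ 𝒜.Am m) (h0 : red I f = 0) :
    memSpan (𝒜.Am m : Set (MvPowerSeries ℕ A)) (constsOf I) f :=
  stmt11_general I 𝒜 m f hf h0
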